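/- Let θ, θ' ∈ ℝ^Y and π_θ = softmax(θ), π_{θ'} = softmax(θ'). Then ‖π_θ - π_{θ'}‖₁ ≤ ‖θ - θ'‖_span ≤ ‖θ - θ'‖₂, where ‖x‖_span = (max_y x_y - min_y x_y)/2. -/

import Mathlib

open Finset

/-- Softmax parametrization of a distribution over a finite set. -/
noncomputable def softmax {Y : Type*} [Fintype Y] (θ : Y → ℝ) : Y → ℝ :=
  fun y => Real.exp (θ y) / ∑ y', Real.exp (θ y')

/-- Span seminorm: `‖x‖_span = inf_c ‖x + c·1‖_∞` (sup norm on functions). -/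
noncomputable def spanNorm {Y : Type*} [Fintype Y] (x : Y → ℝ) : ℝ :=
  ⨅ c : ℝ, ‖(fun y => x y + c : Y → ℝ)‖


/-! Write `p = softmax θ`. Tilting by `z` with `|z| ≤ s` gives `softmax (θ + z) ∝ p v` with
`v = exp z ∈ [e^{-s}, e^s]`, so its `ℓ¹` distance to `p` is `E_p |v - m| / m` for `m = E_p v`.
Bounding `|v - m|` by its chord over `[e^{-s}, e^s]` and optimising over `m` gives at most
`2 tanh (s / 2) ≤ s`. Softmax is invariant under adding constants, which absorbs the infimum
in the span seminorm; the `ℓ²` bound is the sup-norm bound at `c = 0`. -/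

namespace Real

theorem sinh_le_mul_cosh {x : ℝ} (hx : 0 ≤ x) : sinh x ≤ x * cosh x := by
  have hderiv (t : ℝ) : HasDerivAt (fun t => t * cosh t - sinh t) (t * sinh t) t :=
    (((hasDerivAt_id' t).mul (hasDerivAt_cosh t)).sub (hasDerivAt_sinh t)).congr_deriv (by ring)
  have hmono : MonotoneOn (fun t => t * cosh t - sinh t) (Set.Ici 0) := by
    refine monotoneOn_of_deriv_nonneg (convex_Ici 0) (by fun_prop)
      (fun t _ => (hderiv t).differentiableAt.differentiableWithinAt) fun t ht => ?_
    rw [interior_Ici, Set.mem_Ioi] at ht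
    rw [(hderiv t).deriv]
    exact mul_nonneg ht.le (sinh_nonneg_iff.2 ht.le)
  have := hmono Set.self_mem_Ici hx hx
  simp only [zero_mul, sinh_zero, sub_zero] at this
  linarith

theorem two_mul_cosh_sub_one_le {x : ℝ} (hx : 0 ≤ x) : 2 * (cosh x - 1) ≤ x * sinh x := by
  obtain ⟨t, rfl⟩ : ∃ t, x = 2 * t := ⟨x / 2, by ring⟩
  have ht : 0 ≤ t := by linarith
  have h := mul_le_mul_of_nonneg_left (sinh_le_mul_cosh ht) (sinh_nonneg_iff.2 ht)
  rw [cosh_two_mul, sinh_two_mul, cosh_sq]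
  linarith

end Real

open Real

section WeightedMean

variable {Y : Type*} [Fintype Y] {p v : Y → ℝ} {a b : ℝ}

theorem le_sum_mul_of_forall_le (hp : ∀ y, 0 ≤ p y) (hp1 : ∑ y, p y = 1)
    (hv : ∀ y, a ≤ v y) : a ≤ ∑ y, p y * v y :=
  calc a = ∑ y, p y * a := by rw [← sum_mul, hp1, one_mul]
    _ ≤ ∑ y, p y * v y := sum_le_sum fun y _ => mul_le_mul_of_nonneg_left (hv y) (hp y)

theorem sum_mul_le_of_forall_le (hp : ∀ y, 0 ≤ p y) (hp1 : ∑ y, p y = 1)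
    (hv : ∀ y, v y ≤ b) : ∑ y, p y * v y ≤ b :=
  calc ∑ y, p y * v y ≤ ∑ y, p y * b :=
        sum_le_sum fun y _ => mul_le_mul_of_nonneg_left (hv y) (hp y)
    _ = b := by rw [← sum_mul, hp1, one_mul]

theorem mul_sum_mul_abs_sub_le (hp : ∀ y, 0 ≤ p y) (hp1 : ∑ y, p y = 1)
    (hv : ∀ y, v y ∈ Set.Icc a b) :
    (b - a) * ∑ y, p y * |v y - ∑ y', p y' * v y'|
      ≤ 2 * (b - ∑ y, p y * v y) * (∑ y, p y * v y - a) := by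
  set m := ∑ y, p y * v y with hm
  have ham : a ≤ m := le_sum_mul_of_forall_le hp hp1 fun y => (hv y).1
  have hmb : m ≤ b := sum_mul_le_of_forall_le hp hp1 fun y => (hv y).2
  -- `|v - m|` is convex in `v`, so it lies below its chord over `[a, b]`.
  have chord (y : Y) : (b - a) * |v y - m| ≤ (b - m) * (v y - a) + (m - a) * (b - v y) := by
    obtain ⟨hay, hyb⟩ := hv y
    rcases abs_cases (v y - m) with ⟨h, -⟩ | ⟨h, -⟩ <;> rw [h] <;> nlinarith
  calc (b - a) * ∑ y, p y * |v y - m|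
      = ∑ y, p y * ((b - a) * |v y - m|) := by
        rw [mul_sum]; exact sum_congr rfl fun y _ => by ring
    _ ≤ ∑ y, p y * ((b - m) * (v y - a) + (m - a) * (b - v y)) :=
        sum_le_sum fun y _ => mul_le_mul_of_nonneg_left (chord y) (hp y)
    _ = (b - m) * ∑ y, p y * v y - (b - m) * a * ∑ y, p y
          + (m - a) * b * ∑ y, p y - (m - a) * ∑ y, p y * v y := by
        simp only [mul_sum, ← sum_sub_distrib, ← sum_add_distrib]
        exact sum_congr rfl fun y _ => by ring
    _ = 2 * (b - m) * (m - a) := by rw [← hm, hp1]; ring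

end WeightedMean

theorem two_mul_exp_sub_mul_sub_exp_neg_le {s m : ℝ} (hs : 0 ≤ s) (hm : 0 < m) :
    2 * (exp s - m) * (m - exp (-s)) ≤ s * (exp s - exp (-s)) * m := by
  have hprod : exp s * exp (-s) = 1 := by rw [← exp_add, add_neg_cancel, exp_zero]
  have hcosh := two_mul_cosh_sub_one_le hs
  rw [cosh_eq, sinh_eq] at hcosh
  nlinarith [sq_nonneg (m - 1), mul_le_mul_of_nonneg_left hcosh hm.le]

section Softmax

variable {Y : Type*} [Fintype Y]

theorem softmax_pos (θ : Y → ℝ) (y : Y) : 0 < softmax θ y :=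
  div_pos (exp_pos _) (sum_pos (fun _ _ => exp_pos _) ⟨y, mem_univ y⟩)

theorem sum_softmax [Nonempty Y] (θ : Y → ℝ) : ∑ y, softmax θ y = 1 := by
  simp only [softmax, ← sum_div]
  exact div_self (sum_pos (fun _ _ => exp_pos _) univ_nonempty).ne'

theorem softmax_add_const (θ : Y → ℝ) (c : ℝ) : softmax (fun y => θ y + c) = softmax θ := by
  funext y
  simp only [softmax, exp_add, ← sum_mul]
  exact mul_div_mul_right _ _ (exp_ne_zero c)

theorem softmax_add (θ z : Y → ℝ) (y : Y) :
    softmax (θ + z) y = softmax θ y * exp (z y) / ∑ y', softmax θ y' * exp (z y') := by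
  have hS : ∑ y', exp (θ y') ≠ 0 := (sum_pos (fun _ _ => exp_pos _) ⟨y, mem_univ y⟩).ne'
  simp only [softmax, Pi.add_apply, exp_add, div_mul_eq_mul_div, ← sum_div]
  field_simp

theorem sum_abs_softmax_add_sub_le_norm (θ z : Y → ℝ) :
    ∑ y, |softmax (θ + z) y - softmax θ y| ≤ ‖z‖ := by
  rcases isEmpty_or_nonempty Y with hY | hY
  · simp
  rcases (norm_nonneg z).eq_or_lt with hz | hz
  · simp [norm_eq_zero.1 hz.symm]
  set p := softmax θ
  set m := ∑ y, p y * exp (z y) with hm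
  have hp := softmax_pos θ
  have hm_pos : 0 < m := sum_pos (fun y _ => mul_pos (hp y) (exp_pos _)) univ_nonempty
  have hv (y : Y) : exp (z y) ∈ Set.Icc (exp (-‖z‖)) (exp ‖z‖) := by
    have hzy := norm_le_pi_norm z y
    rw [Real.norm_eq_abs] at hzy
    exact ⟨exp_le_exp.2 (abs_le.1 hzy).1, exp_le_exp.2 (abs_le.1 hzy).2⟩
  have hdist : ∑ y, |softmax (θ + z) y - p y| = (∑ y, p y * |exp (z y) - m|) / m := by
    rw [sum_div]
    refine sum_congr rfl fun y _ => ?_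
    rw [softmax_add, ← hm, show p y * exp (z y) / m - p y = p y * (exp (z y) - m) / m by
      field_simp, abs_div, abs_mul, abs_of_pos (hp y), abs_of_pos hm_pos]
  have hmad := mul_sum_mul_abs_sub_le (fun y => (hp y).le) (sum_softmax θ) hv
  have hexp := two_mul_exp_sub_mul_sub_exp_neg_le hz.le hm_pos
  have hgap : 0 < exp ‖z‖ - exp (-‖z‖) := sub_pos.2 (exp_lt_exp.2 (by linarith))
  rw [hdist, div_le_iff₀ hm_pos]
  exact le_of_mul_le_mul_left (hmad.trans (hexp.trans_eq (by ring))) hgap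

end Softmax

theorem spanNorm_le_norm {Y : Type*} [Fintype Y] (x : Y → ℝ) : spanNorm x ≤ ‖x‖ := by
  have hbdd : BddBelow (Set.range fun c : ℝ => ‖(fun y => x y + c : Y → ℝ)‖) :=
    ⟨0, by rintro _ ⟨c, rfl⟩; exact norm_nonneg _⟩
  have h := ciInf_le hbdd 0
  simp only [add_zero] at h
  exact h

theorem norm_le_sqrt_sum_sq {Y : Type*} [Fintype Y] (x : Y → ℝ) : ‖x‖ ≤ √(∑ y, x y ^ 2) :=
  (pi_norm_le_iff_of_nonneg (sqrt_nonneg _)).2 fun y =>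
    abs_le_sqrt (single_le_sum (fun y _ => sq_nonneg (x y)) (mem_univ y))

theorem stmt18 {Y : Type*} [Fintype Y] (θ θ' : Y → ℝ) :
    (∑ y, |softmax θ y - softmax θ' y|)
        ≤ spanNorm (fun y => θ y - θ' y) ∧
    spanNorm (fun y => θ y - θ' y) ≤ Real.sqrt (∑ y, (θ y - θ' y) ^ 2) := by
  refine ⟨le_ciInf fun c => ?_, (spanNorm_le_norm _).trans (norm_le_sqrt_sum_sq _)⟩
  have h := sum_abs_softmax_add_sub_le_norm θ' fun y => θ y - θ' y + c
  have hθ : (θ' + fun y => θ y - θ' y + c) = fun y => θ y + c := by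
    funext y; simp only [Pi.add_apply]; ring
  rwa [hθ, softmax_add_const] at h
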